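/- Self-normalized (peeled) Freedman bound: let (H_{t-1}, F_t)_{t=1}^n be a two-stage filtration with n ≥ 1, and let Δ_1,...,Δ_n be random variables such that Δ_t is F_t-measurable, E[Δ_t | H_{t-1}] = 0 almost surely, and |Δ_t| ≤ 1 almost surely. Let V := ∑_{t=1}^n E[Δ_t² | H_{t-1}] denote the (random) predictable quadratic variation. Then for every δ ∈ (0,1), with probability at least 1 - δ, |∑_{t=1}^n Δ_t| ≤ 4 ( √(V Λ) + Λ ), where Λ := log( 2(⌈log₂ n⌉ + 1)/δ ). -/

import Mathlib

open MeasureTheory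
open scoped ENNReal
open Real
lemma exp_le_one_add_add_sq {y : ℝ} (hy : |y| ≤ 1) : Real.exp y ≤ 1 + y + y ^ 2 := by
  have h := Real.exp_bound hy (n := 2) (by norm_num)
  simp [Finset.sum_range_succ] at h
  have h2 := abs_le.1 h
  nlinarith [sq_abs y, sq_nonneg y, h2.1, h2.2]

lemma integrable_of_bdd {Ω : Type*} {m0 : MeasurableSpace Ω} {μ : Measure Ω}
    [IsFiniteMeasure μ] {f : Ω → ℝ} {c : ℝ}
    (hf : AEStronglyMeasurable f μ) (h : ∀ᵐ ω ∂μ, |f ω| ≤ c) : Integrable f μ :=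
  (integrable_const c).mono' hf (by simpa [Real.norm_eq_abs] using h)

lemma freedman_core
    {Ω : Type*} {m0 : MeasurableSpace Ω} (μ : Measure Ω) [IsProbabilityMeasure μ]
    (n : ℕ) (H F : ℕ → MeasurableSpace Ω)
    (hH : ∀ t, t ≤ n → H t ≤ m0)
    (hHF : ∀ t, 1 ≤ t → t ≤ n → H (t - 1) ≤ F t)
    (hFH : ∀ t, 1 ≤ t → t ≤ n → F t ≤ H t)
    (Δ : ℕ → Ω → ℝ)
    (hmeas : ∀ t, 1 ≤ t → t ≤ n → Measurable[F t] (Δ t))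
    (hcond : ∀ t, 1 ≤ t → t ≤ n → μ[Δ t | H (t - 1)] =ᵐ[μ] 0)
    (hbdd : ∀ t, 1 ≤ t → t ≤ n → ∀ᵐ ω ∂μ, |Δ t ω| ≤ 1)
    (l : ℝ) (hl : |l| ≤ 1) :
    ∫ ω, Real.exp (l * ∑ t ∈ Finset.Icc 1 n, Δ t ω
        - l ^ 2 * ∑ t ∈ Finset.Icc 1 n, (μ[fun ω' => (Δ t ω') ^ 2 | H (t - 1)]) ω) ∂μ ≤ 1 := by
  set v : ℕ → Ω → ℝ := fun t => μ[fun ω' => (Δ t ω') ^ 2 | H (t - 1)] with hv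
  have Hmono : ∀ a b, a ≤ b → b ≤ n → H a ≤ H b := by
    intro a b hab hbn
    induction b with
    | zero => exact le_of_eq (by rw [Nat.le_zero.mp hab])
    | succ b ih =>
      rcases Nat.eq_or_lt_of_le hab with h | h
      · exact le_of_eq (by rw [h])
      · exact le_trans (ih (Nat.lt_succ_iff.mp h) (le_trans (Nat.le_succ b) hbn))
          (le_trans (hHF (b + 1) (by omega) hbn) (hFH (b + 1) (by omega) hbn))
  -- basic measurability of Δ t w.r.t. H b
  have hΔH : ∀ t b, 1 ≤ t → t ≤ b → b ≤ n → Measurable[H b] (Δ t) := fun t b h1 h2 h3 =>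
    (hmeas t h1 (le_trans h2 h3)).mono (le_trans (hFH t h1 (le_trans h2 h3)) (Hmono t b h2 h3))
      le_rfl
  have hΔ0 : ∀ t, 1 ≤ t → t ≤ n → Measurable[m0] (Δ t) := fun t h1 h2 =>
    (hΔH t n h1 h2 le_rfl).mono (hH n le_rfl) le_rfl
  have hΔint : ∀ t, 1 ≤ t → t ≤ n → Integrable (Δ t) μ := fun t h1 h2 =>
    integrable_of_bdd (hΔ0 t h1 h2).aestronglyMeasurable (hbdd t h1 h2)
  have hΔsqint : ∀ t, 1 ≤ t → t ≤ n → Integrable (fun ω => (Δ t ω) ^ 2) μ := by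
    intro t h1 h2
    refine integrable_of_bdd (c := 1) (((hΔ0 t h1 h2).pow measurable_const)).aestronglyMeasurable ?_
    filter_upwards [hbdd t h1 h2] with ω h
    rw [abs_pow]
    exact pow_le_one₀ (abs_nonneg _) h
  -- v t facts
  have hvH : ∀ t, StronglyMeasurable[H (t - 1)] (v t) := fun t => stronglyMeasurable_condExp
  have hv0 : ∀ t, 1 ≤ t → t ≤ n → ∀ᵐ ω ∂μ, 0 ≤ v t ω := by
    intro t h1 h2
    exact condExp_nonneg (Filter.Eventually.of_forall fun ω => sq_nonneg _)
  have hv1 : ∀ t, 1 ≤ t → t ≤ n → ∀ᵐ ω ∂μ, v t ω ≤ 1 := by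
    intro t h1 h2
    have hle : (fun ω => (Δ t ω) ^ 2) ≤ᵐ[μ] (fun _ => (1 : ℝ)) := by
      filter_upwards [hbdd t h1 h2] with ω h
      calc (Δ t ω) ^ 2 = |Δ t ω| ^ 2 := (sq_abs _).symm
      _ ≤ 1 := pow_le_one₀ (abs_nonneg _) h
    have := condExp_mono (m := H (t - 1)) (hΔsqint t h1 h2) (integrable_const 1) hle
    have hc : μ[(fun _ => (1:ℝ)) | H (t - 1)] = fun _ => (1:ℝ) :=
      condExp_const (hH (t - 1) (by omega)) 1
    filter_upwards [this] with ω hω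
    simpa [hc] using hω
  -- a.e. bounds for partial sums
  have hSbddgen : ∀ m, m ≤ n → ∀ᵐ ω ∂μ, |∑ t ∈ Finset.Icc 1 m, Δ t ω| ≤ (m : ℝ) := by
    intro m hmn
    have hall : ∀ᵐ ω ∂μ, ∀ t ∈ Finset.Icc 1 m, |Δ t ω| ≤ 1 :=
      (ae_ball_iff (Finset.Icc 1 m).countable_toSet).2 fun t ht =>
        hbdd t (Finset.mem_Icc.mp ht).1 (le_trans (Finset.mem_Icc.mp ht).2 hmn)
    filter_upwards [hall] with ω h
    calc |∑ t ∈ Finset.Icc 1 m, Δ t ω| ≤ ∑ t ∈ Finset.Icc 1 m, |Δ t ω| :=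
          Finset.abs_sum_le_sum_abs _ _
      _ ≤ ∑ t ∈ Finset.Icc 1 m, (1 : ℝ) := Finset.sum_le_sum h
      _ = (m : ℝ) := by simp [Nat.card_Icc]
  have hV0gen : ∀ m, m ≤ n → ∀ᵐ ω ∂μ, 0 ≤ ∑ t ∈ Finset.Icc 1 m, v t ω := by
    intro m hmn
    have hall : ∀ᵐ ω ∂μ, ∀ t ∈ Finset.Icc 1 m, 0 ≤ v t ω :=
      (ae_ball_iff (Finset.Icc 1 m).countable_toSet).2 fun t ht =>
        hv0 t (Finset.mem_Icc.mp ht).1 (le_trans (Finset.mem_Icc.mp ht).2 hmn)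
    filter_upwards [hall] with ω h
    exact Finset.sum_nonneg h
  -- the exponential supermartingale
  set W : ℕ → Ω → ℝ := fun m ω => Real.exp (l * ∑ t ∈ Finset.Icc 1 m, Δ t ω
      - l ^ 2 * ∑ t ∈ Finset.Icc 1 m, v t ω) with hWdef
  have hWmeas : ∀ m, m ≤ n → Measurable[m0] (W m) := by
    intro m hmn
    have hS : Measurable[m0] fun ω => ∑ t ∈ Finset.Icc 1 m, Δ t ω :=
      Finset.measurable_sum _ fun t ht =>
        hΔ0 t (Finset.mem_Icc.mp ht).1 (le_trans (Finset.mem_Icc.mp ht).2 hmn)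
    have hV : Measurable[m0] fun ω => ∑ t ∈ Finset.Icc 1 m, v t ω :=
      Finset.measurable_sum _ fun t ht =>
        ((hvH t).mono (hH (t - 1) (by
          have := (Finset.mem_Icc.mp ht).2; omega))).measurable
    exact Real.measurable_exp.comp ((hS.const_mul l).sub (hV.const_mul (l ^ 2)))
  have hWbdd : ∀ m, m ≤ n → ∀ᵐ ω ∂μ, |W m ω| ≤ Real.exp m := by
    intro m hmn
    filter_upwards [hSbddgen m hmn, hV0gen m hmn] with ω h1 h2
    rw [abs_of_pos (Real.exp_pos _), Real.exp_le_exp]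
    have hl1 := abs_le.1 hl
    have hS1 := abs_le.1 h1
    nlinarith [sq_nonneg l]
  have hWint : ∀ m, m ≤ n → Integrable (W m) μ := fun m hmn =>
    integrable_of_bdd (hWmeas m hmn).aestronglyMeasurable (hWbdd m hmn)
  suffices h : ∀ m, m ≤ n → ∫ ω, W m ω ∂μ ≤ 1 from h n le_rfl
  intro m
  induction m with
  | zero => intro _; simp [W]
  | succ m ih =>
    intro hmn
    have hmn' : m ≤ n := le_trans (Nat.le_succ m) hmn
    have hm : H m ≤ m0 := hH m hmn'
    have h1m : (1 : ℕ) ≤ m + 1 := by omega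
    -- measurability w.r.t. H m
    have hSmeas : Measurable[H m] fun ω => ∑ t ∈ Finset.Icc 1 m, Δ t ω :=
      Finset.measurable_sum _ fun t ht =>
        hΔH t m (Finset.mem_Icc.mp ht).1 (Finset.mem_Icc.mp ht).2 hmn'
    have hVmeas : Measurable[H m] fun ω => ∑ t ∈ Finset.Icc 1 m, v t ω :=
      Finset.measurable_sum _ fun t ht =>
        ((hvH t).mono (Hmono (t - 1) m (by
          have := (Finset.mem_Icc.mp ht).2; omega) hmn')).measurable
    have hvm1meas : Measurable[H m] (v (m + 1)) := (hvH (m + 1)).measurable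
    set A : Ω → ℝ := fun ω => Real.exp (l * ∑ t ∈ Finset.Icc 1 m, Δ t ω
        - l ^ 2 * ∑ t ∈ Finset.Icc 1 m, v t ω - l ^ 2 * v (m + 1) ω) with hAdef
    set g : Ω → ℝ := fun ω => Real.exp (l * Δ (m + 1) ω) with hgdef
    have hAmeas : Measurable[H m] A :=
      Real.measurable_exp.comp (((hSmeas.const_mul l).sub (hVmeas.const_mul (l ^ 2))).sub
        (hvm1meas.const_mul (l ^ 2)))
    have hAbdd : ∀ᵐ ω ∂μ, |A ω| ≤ Real.exp m := by
      filter_upwards [hSbddgen m hmn', hV0gen m hmn', hv0 (m + 1) h1m hmn] with ω h1 h2 h3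
      rw [abs_of_pos (Real.exp_pos _), Real.exp_le_exp]
      have hl1 := abs_le.1 hl
      have hS1 := abs_le.1 h1
      nlinarith [sq_nonneg l]
    have hgmeas : Measurable[m0] g :=
      Real.measurable_exp.comp ((hΔ0 (m + 1) h1m hmn).const_mul l)
    have hgbdd : ∀ᵐ ω ∂μ, |g ω| ≤ Real.exp 1 := by
      filter_upwards [hbdd (m + 1) h1m hmn] with ω h
      rw [abs_of_pos (Real.exp_pos _), Real.exp_le_exp]
      have hl1 := abs_le.1 hl
      have hd := abs_le.1 h
      nlinarith
    have hgint : Integrable g μ := integrable_of_bdd hgmeas.aestronglyMeasurable hgbdd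
    have hWm1 : W (m + 1) = fun ω => A ω * g ω := by
      funext ω
      simp only [hWdef, hAdef, hgdef]
      rw [← Real.exp_add, Finset.sum_Icc_succ_top h1m, Finset.sum_Icc_succ_top h1m]
      congr 1
      ring
    have hAg_int : Integrable (fun ω => A ω * g ω) μ := by
      refine integrable_of_bdd (c := Real.exp m * Real.exp 1)
        (((hAmeas.mono hm le_rfl).mul hgmeas).aestronglyMeasurable) ?_
      filter_upwards [hAbdd, hgbdd] with ω h1 h2
      rw [abs_mul]
      exact mul_le_mul h1 h2 (abs_nonneg _) (Real.exp_pos _).le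
    -- pull out the H m-measurable factor
    have hpull : μ[fun ω => A ω * g ω | H m] =ᵐ[μ] A * μ[g | H m] :=
      condExp_stronglyMeasurable_mul_of_bound hm hAmeas.stronglyMeasurable hgint (Real.exp m)
        (by simpa [Real.norm_eq_abs] using hAbdd)
    -- bound the conditional expectation of g
    set f1 : Ω → ℝ := fun ω => 1 + l * Δ (m + 1) ω with hf1def
    set f2 : Ω → ℝ := fun ω => l ^ 2 * (Δ (m + 1) ω) ^ 2 with hf2def
    have hf1int : Integrable f1 μ := by
      refine integrable_of_bdd (c := 2)
        ((measurable_const.add ((hΔ0 (m + 1) h1m hmn).const_mul l)).aestronglyMeasurable) ?_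
      filter_upwards [hbdd (m + 1) h1m hmn] with ω h
      have hld : |l * Δ (m + 1) ω| ≤ 1 := by
        rw [abs_mul]
        calc |l| * |Δ (m + 1) ω| ≤ 1 * 1 := mul_le_mul hl h (abs_nonneg _) zero_le_one
          _ = 1 := one_mul 1
      have h2 := abs_le.1 hld
      simp only [hf1def]
      rw [abs_le]
      constructor <;> linarith [h2.1, h2.2]
    have hf2int : Integrable f2 μ := by
      refine integrable_of_bdd (c := 1)
        ((((hΔ0 (m + 1) h1m hmn).pow measurable_const).const_mul (l ^ 2)).aestronglyMeasurable) ?_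
      filter_upwards [hbdd (m + 1) h1m hmn] with ω h
      have h2l : l ^ 2 ≤ 1 := by
        have := abs_le.1 hl; nlinarith
      have h2d : (Δ (m + 1) ω) ^ 2 ≤ 1 := by
        have := abs_le.1 h; nlinarith
      simp only [hf2def]
      rw [abs_le]
      constructor
      · nlinarith [sq_nonneg l, sq_nonneg (Δ (m + 1) ω)]
      · nlinarith [mul_le_mul_of_nonneg_right h2l (sq_nonneg (Δ (m + 1) ω)), sq_nonneg (Δ (m + 1) ω)]
    have hptwise : g ≤ᵐ[μ] f1 + f2 := by
      filter_upwards [hbdd (m + 1) h1m hmn] with ω h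
      have hy : |l * Δ (m + 1) ω| ≤ 1 := by
        rw [abs_mul]
        calc |l| * |Δ (m + 1) ω| ≤ 1 * 1 := mul_le_mul hl h (abs_nonneg _) zero_le_one
          _ = 1 := one_mul 1
      have hexp := exp_le_one_add_add_sq hy
      simp only [hgdef, hf1def, hf2def, Pi.add_apply]
      nlinarith [hexp]
    have h1 : μ[g | H m] ≤ᵐ[μ] μ[f1 + f2 | H m] := condExp_mono hgint (hf1int.add hf2int) hptwise
    have e1 : μ[f1 + f2 | H m] =ᵐ[μ] μ[f1 | H m] + μ[f2 | H m] := condExp_add hf1int hf2int (H m)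
    have e2 : μ[f1 | H m] =ᵐ[μ] fun _ => (1 : ℝ) := by
      have hsplit : f1 = (fun _ => (1 : ℝ)) + l • Δ (m + 1) := by
        funext ω; simp [hf1def, smul_eq_mul]
      rw [hsplit]
      have ha := condExp_add (m := H m) (μ := μ) (integrable_const (1 : ℝ))
        ((hΔint (m + 1) h1m hmn).smul l)
      refine ha.trans ?_
      have hb : μ[l • Δ (m + 1) | H m] =ᵐ[μ] l • μ[Δ (m + 1) | H m] := condExp_smul l (Δ (m + 1)) (H m)
      have hc : μ[Δ (m + 1) | H m] =ᵐ[μ] 0 := hcond (m + 1) h1m hmn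
      have hd : μ[(fun _ => (1 : ℝ)) | H m] = fun _ => (1 : ℝ) := condExp_const hm 1
      filter_upwards [hb, hc] with ω hbω hcω
      simp only [Pi.add_apply, hd, Pi.smul_apply, smul_eq_mul]
      rw [hbω]
      simp only [Pi.smul_apply, smul_eq_mul, hcω, Pi.zero_apply, mul_zero, add_zero]
    have e3 : μ[f2 | H m] =ᵐ[μ] fun ω => l ^ 2 * v (m + 1) ω := by
      have hsplit : f2 = (l ^ 2) • (fun ω => (Δ (m + 1) ω) ^ 2) := by
        funext ω; simp [hf2def, smul_eq_mul]
      rw [hsplit]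
      have ha : μ[(l ^ 2) • (fun ω => (Δ (m + 1) ω) ^ 2) | H m] =ᵐ[μ]
          (l ^ 2) • μ[(fun ω => (Δ (m + 1) ω) ^ 2) | H m] := condExp_smul (l ^ 2) _ (H m)
      refine ha.trans ?_
      filter_upwards with ω
      simp only [Pi.smul_apply, smul_eq_mul, hv, Nat.add_sub_cancel]
    have hgle : μ[g | H m] ≤ᵐ[μ] fun ω => Real.exp (l ^ 2 * v (m + 1) ω) := by
      filter_upwards [h1, e1, e2, e3] with ω ha hb hc hd
      have : (μ[g | H m]) ω ≤ 1 + l ^ 2 * v (m + 1) ω := by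
        calc (μ[g | H m]) ω ≤ (μ[f1 + f2 | H m]) ω := ha
          _ = (μ[f1 | H m]) ω + (μ[f2 | H m]) ω := by rw [hb]; rfl
          _ = 1 + l ^ 2 * v (m + 1) ω := by rw [hc, hd]
      refine this.trans ?_
      have := Real.add_one_le_exp (l ^ 2 * v (m + 1) ω)
      linarith
    have hle2 : μ[fun ω => A ω * g ω | H m] ≤ᵐ[μ] W m := by
      filter_upwards [hpull, hgle] with ω hp hg2
      rw [hp]
      simp only [Pi.mul_apply]
      calc A ω * (μ[g | H m]) ω ≤ A ω * Real.exp (l ^ 2 * v (m + 1) ω) :=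
            mul_le_mul_of_nonneg_left hg2 (Real.exp_pos _).le
        _ = W m ω := by
            simp only [hAdef, hWdef]
            rw [← Real.exp_add]
            congr 1
            ring
    calc ∫ ω, W (m + 1) ω ∂μ = ∫ ω, A ω * g ω ∂μ := by rw [hWm1]
      _ = ∫ ω, (μ[fun ω => A ω * g ω | H m]) ω ∂μ := (integral_condExp hm).symm
      _ ≤ ∫ ω, W m ω ∂μ := integral_mono_ae integrable_condExp (hWint m hmn') hle2
      _ ≤ 1 := ih hmn'


lemma peel_point (Λ Vv Ss : ℝ) (K : ℕ) (hΛq : 1/4 ≤ Λ) (hΛpos : 0 < Λ)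
    (hV0 : 0 ≤ Vv) (hVK : Vv ≤ 2 ^ K)
    (hgood : ∀ k, k ≤ K →
      min 1 (Real.sqrt (Λ / 2 ^ k)) * Ss - (min 1 (Real.sqrt (Λ / 2 ^ k))) ^ 2 * Vv < Λ ∧
      (-(min 1 (Real.sqrt (Λ / 2 ^ k)))) * Ss - (-(min 1 (Real.sqrt (Λ / 2 ^ k)))) ^ 2 * Vv < Λ) :
    |Ss| ≤ 4 * (Real.sqrt (Vv * Λ) + Λ) := by
  classical
  have hex : ∃ k, Vv ≤ (2:ℝ) ^ k := ⟨K, hVK⟩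
  set k := Nat.find hex with hkdef
  have hk1 : Vv ≤ (2:ℝ) ^ k := Nat.find_spec hex
  have hkK : k ≤ K := Nat.find_min' hex hVK
  have hklow : k ≠ 0 → (2:ℝ) ^ (k - 1) < Vv := by
    intro h0
    have := Nat.find_min hex (m := k - 1) (by omega)
    push_neg at this
    exact this
  set L := min 1 (Real.sqrt (Λ / 2 ^ k)) with hLdef
  have hP : (0:ℝ) < 2 ^ k := by positivity
  have hL0 : 0 < L := lt_min one_pos (Real.sqrt_pos.2 (div_pos hΛpos hP))
  have hg := hgood k hkK
  have habs : L * |Ss| < Λ + L ^ 2 * Vv := by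
    rcases abs_cases Ss with ⟨h, _⟩ | ⟨h, _⟩
    · rw [h]; have := hg.1; linarith
    · rw [h]; have := hg.2; rw [neg_sq] at this; linarith
  rcases le_total 1 (Real.sqrt (Λ / 2 ^ k)) with hcase | hcase
  · -- L = 1, and 2^k ≤ Λ
    have hL1 : L = 1 := min_eq_left hcase
    have h2kΛ : (2:ℝ) ^ k ≤ Λ := by
      have h1 : (1:ℝ) ≤ Λ / 2 ^ k := by
        nlinarith [Real.sq_sqrt (le_of_lt (div_pos hΛpos hP)), Real.sqrt_nonneg (Λ / 2 ^ k)]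
      calc (2:ℝ) ^ k = 1 * 2 ^ k := (one_mul _).symm
        _ ≤ (Λ / 2 ^ k) * 2 ^ k := by nlinarith
        _ = Λ := div_mul_cancel₀ _ (ne_of_gt hP)
    rw [hL1] at habs
    have hs := Real.sqrt_nonneg (Vv * Λ)
    nlinarith
  · -- L = sqrt (Λ / 2^k)
    have hL1 : L = Real.sqrt (Λ / 2 ^ k) := min_eq_right hcase
    have hLsq : L ^ 2 = Λ / 2 ^ k := by
      rw [hL1]; exact Real.sq_sqrt (le_of_lt (div_pos hΛpos hP))
    set s2 := Real.sqrt (Λ * 2 ^ k) with hs2def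
    have hs2 : L * s2 = Λ := by
      rw [hL1, hs2def, ← Real.sqrt_mul (le_of_lt (div_pos hΛpos hP))]
      rw [show Λ / 2 ^ k * (Λ * 2 ^ k) = Λ ^ 2 by field_simp]
      exact Real.sqrt_sq hΛpos.le
    have hLP : L * 2 ^ k = s2 := by
      have h1 : (L * 2 ^ k) ^ 2 = Λ * 2 ^ k := by
        rw [mul_pow, hLsq]; field_simp
      have h2 : 0 ≤ L * 2 ^ k := by positivity
      rw [hs2def, ← h1, Real.sqrt_sq h2]
    have hSs2 : |Ss| < 2 * s2 := by
      have h2 : L ^ 2 * Vv ≤ L * s2 := by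
        calc L ^ 2 * Vv ≤ L ^ 2 * 2 ^ k := by nlinarith [sq_nonneg L]
          _ = L * (L * 2 ^ k) := by ring
          _ = L * s2 := by rw [hLP]
      have hexp : L * (2 * s2) = L * s2 + L * s2 := by ring
      have h3 : L * |Ss| < L * (2 * s2) := by rw [hexp]; linarith [habs, h2, hs2]
      exact (mul_lt_mul_iff_right₀ hL0).mp h3
    rcases Nat.eq_zero_or_pos k with hk0 | hkpos
    · -- k = 0 : s2 = sqrt Λ, and 2 sqrt Λ ≤ 4 Λ
      have hs20 : s2 = Real.sqrt Λ := by rw [hs2def, hk0]; norm_num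
      rw [hs20] at hSs2
      have h4 : Real.sqrt Λ ≤ 2 * Λ := by
        nlinarith [Real.sq_sqrt hΛpos.le, Real.sqrt_nonneg Λ]
      have hs := Real.sqrt_nonneg (Vv * Λ)
      linarith
    · -- k ≥ 1 : 2^k < 2 Vv
      have h2k : (2:ℝ) ^ k < 2 * Vv := by
        have := hklow (by omega)
        have hkk : (2:ℝ) ^ k = 2 * 2 ^ (k - 1) := by
          rw [← pow_succ']
          congr 1
          omega
        rw [hkk]; linarith
      have hs2le : s2 ≤ Real.sqrt (2 * (Λ * Vv)) := by
        rw [hs2def]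
        apply Real.sqrt_le_sqrt
        have h := mul_lt_mul_of_pos_left h2k hΛpos
        have he : Λ * (2 * Vv) = 2 * (Λ * Vv) := by ring
        linarith
      have hsplit : Real.sqrt (2 * (Λ * Vv)) = Real.sqrt 2 * Real.sqrt (Λ * Vv) := by
        rw [← Real.sqrt_mul (by norm_num)]
      have hsq2 : Real.sqrt 2 ≤ 2 := by
        nlinarith [Real.sq_sqrt (by norm_num : (0:ℝ) ≤ 2), Real.sqrt_nonneg 2]
      have hcomm : Real.sqrt (Λ * Vv) = Real.sqrt (Vv * Λ) := by rw [mul_comm]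
      have hs := Real.sqrt_nonneg (Λ * Vv)
      have hfin : s2 ≤ 2 * Real.sqrt (Vv * Λ) := by
        rw [← hcomm]
        refine hs2le.trans ?_
        rw [hsplit]
        exact mul_le_mul_of_nonneg_right hsq2 hs
      have hsvΛ := Real.sqrt_nonneg (Vv * Λ)
      linarith



/-- **Self-normalized (peeled) Freedman bound.** With a two-stage filtration
`H (t-1) ≤ F t ≤ H t` of length `n ≥ 1` and martingale differences `Δ t` (`F t`-measurable,
`E[Δ t | H (t-1)] = 0` a.s., `|Δ t| ≤ 1` a.s.), letting
`V = ∑ E[Δ t ^ 2 | H (t-1)]` be the predictable quadratic variation, for every `δ ∈ (0,1)`,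
with probability at least `1 - δ`, `|∑ Δ t| ≤ 4 (√(V Λ) + Λ)` where
`Λ = log (2 (⌈log₂ n⌉ + 1) / δ)`. -/
theorem peeled_freedman
    {Ω : Type*} {m0 : MeasurableSpace Ω} (μ : Measure Ω) [IsProbabilityMeasure μ]
    (n : ℕ) (hn : 1 ≤ n) (H F : ℕ → MeasurableSpace Ω)
    (hH : ∀ t, t ≤ n → H t ≤ m0)
    (hHF : ∀ t, 1 ≤ t → t ≤ n → H (t - 1) ≤ F t)
    (hFH : ∀ t, 1 ≤ t → t ≤ n → F t ≤ H t)
    (Δ : ℕ → Ω → ℝ)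
    (hmeas : ∀ t, 1 ≤ t → t ≤ n → Measurable[F t] (Δ t))
    (hcond : ∀ t, 1 ≤ t → t ≤ n → μ[Δ t | H (t - 1)] =ᵐ[μ] 0)
    (hbdd : ∀ t, 1 ≤ t → t ≤ n → ∀ᵐ ω ∂μ, |Δ t ω| ≤ 1)
    (δ : ℝ) (hδ0 : 0 < δ) (hδ1 : δ < 1) :
    ENNReal.ofReal (1 - δ) ≤
      μ {ω | |∑ t ∈ Finset.Icc 1 n, Δ t ω| ≤
          4 * (Real.sqrt ((∑ t ∈ Finset.Icc 1 n, (μ[fun ω' => (Δ t ω') ^ 2 | H (t - 1)]) ω) *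
                Real.log (2 * ((⌈Real.logb 2 (n : ℝ)⌉ : ℝ) + 1) / δ)) +
              Real.log (2 * ((⌈Real.logb 2 (n : ℝ)⌉ : ℝ) + 1) / δ))} := by
  classical
  have hn0 : (0:ℝ) < n := by exact_mod_cast Nat.lt_of_lt_of_le Nat.zero_lt_one hn
  have hlogb0 : 0 ≤ Real.logb 2 (n:ℝ) := Real.logb_nonneg one_lt_two (by exact_mod_cast hn)
  have hceil0 : (0:ℤ) ≤ ⌈Real.logb 2 (n:ℝ)⌉ := Int.ceil_nonneg hlogb0
  set K : ℕ := (⌈Real.logb 2 (n:ℝ)⌉).toNat with hKdef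
  have hKr : ((⌈Real.logb 2 (n:ℝ)⌉ : ℤ) : ℝ) = (K : ℝ) := by
    rw [hKdef]; exact_mod_cast (Int.toNat_of_nonneg hceil0).symm
  simp only [hKr]
  set Λ : ℝ := Real.log (2 * ((K:ℝ) + 1) / δ) with hΛdef
  have hKpos : (0:ℝ) < (K:ℝ) + 1 := by positivity
  have harg : (2:ℝ) ≤ 2 * ((K:ℝ) + 1) / δ := by
    rw [le_div_iff₀ hδ0]; nlinarith
  have hargpos : (0:ℝ) < 2 * ((K:ℝ) + 1) / δ := by positivity
  have hΛ2 : Real.log 2 ≤ Λ := by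
    rw [hΛdef]; exact Real.log_le_log two_pos harg
  have hΛpos : 0 < Λ := lt_of_lt_of_le (Real.log_pos one_lt_two) hΛ2
  have hΛq : 1/4 ≤ Λ := le_trans (by linarith [Real.log_two_gt_d9]) hΛ2
  have hexpΛ : Real.exp Λ = 2 * ((K:ℝ) + 1) / δ := by rw [hΛdef]; exact Real.exp_log hargpos
  have hexpneg : Real.exp (-Λ) = δ / (2 * ((K:ℝ) + 1)) := by
    rw [Real.exp_neg, hexpΛ, inv_div]
  have h2K : (n:ℝ) ≤ 2 ^ K := by
    have h1 : (n:ℝ) = (2:ℝ) ^ Real.logb 2 (n:ℝ) := (Real.rpow_logb two_pos (by norm_num) hn0).symm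
    have h2 : Real.logb 2 (n:ℝ) ≤ (K:ℝ) := le_trans (Int.le_ceil _) (le_of_eq hKr)
    calc (n:ℝ) = (2:ℝ) ^ Real.logb 2 (n:ℝ) := h1
      _ ≤ (2:ℝ) ^ ((K:ℝ)) := Real.rpow_le_rpow_of_exponent_le one_le_two h2
      _ = (2:ℝ) ^ (K:ℕ) := by rw [Real.rpow_natCast]
  -- abbreviations
  set SS : Ω → ℝ := fun ω => ∑ t ∈ Finset.Icc 1 n, Δ t ω with hSS
  set VV : Ω → ℝ := fun ω =>
    ∑ t ∈ Finset.Icc 1 n, (μ[fun ω' => (Δ t ω') ^ 2 | H (t - 1)]) ω with hVV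
  -- measurability
  have hΔ0 : ∀ t, 1 ≤ t → t ≤ n → Measurable[m0] (Δ t) := fun t h1 h2 =>
    (hmeas t h1 h2).mono (le_trans (hFH t h1 h2) (hH t h2)) le_rfl
  have hSmeas : Measurable[m0] SS :=
    Finset.measurable_sum _ fun t ht =>
      hΔ0 t (Finset.mem_Icc.mp ht).1 (Finset.mem_Icc.mp ht).2
  have hVmeas : Measurable[m0] VV :=
    Finset.measurable_sum _ fun t ht =>
      (stronglyMeasurable_condExp.mono (hH (t - 1) (by
        have := (Finset.mem_Icc.mp ht).2; omega))).measurable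
  -- a.e. facts
  have hSbdd : ∀ᵐ ω ∂μ, |SS ω| ≤ (n : ℝ) := by
    have hall : ∀ᵐ ω ∂μ, ∀ t ∈ Finset.Icc 1 n, |Δ t ω| ≤ 1 :=
      (ae_ball_iff (Finset.Icc 1 n).countable_toSet).2 fun t ht =>
        hbdd t (Finset.mem_Icc.mp ht).1 (Finset.mem_Icc.mp ht).2
    filter_upwards [hall] with ω h
    calc |SS ω| ≤ ∑ t ∈ Finset.Icc 1 n, |Δ t ω| := Finset.abs_sum_le_sum_abs _ _
      _ ≤ ∑ t ∈ Finset.Icc 1 n, (1:ℝ) := Finset.sum_le_sum h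
      _ = (n : ℝ) := by simp [Nat.card_Icc]
  have hΔsqint : ∀ t, 1 ≤ t → t ≤ n → Integrable (fun ω => (Δ t ω) ^ 2) μ := by
    intro t h1 h2
    refine integrable_of_bdd (c := 1) (((hΔ0 t h1 h2).pow measurable_const)).aestronglyMeasurable ?_
    filter_upwards [hbdd t h1 h2] with ω h
    rw [abs_pow]
    exact pow_le_one₀ (abs_nonneg _) h
  have hv0 : ∀ t, 1 ≤ t → t ≤ n →
      ∀ᵐ ω ∂μ, 0 ≤ (μ[fun ω' => (Δ t ω') ^ 2 | H (t - 1)]) ω := fun t h1 h2 =>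
    condExp_nonneg (Filter.Eventually.of_forall fun ω => sq_nonneg _)
  have hv1 : ∀ t, 1 ≤ t → t ≤ n →
      ∀ᵐ ω ∂μ, (μ[fun ω' => (Δ t ω') ^ 2 | H (t - 1)]) ω ≤ 1 := by
    intro t h1 h2
    have hle : (fun ω => (Δ t ω) ^ 2) ≤ᵐ[μ] (fun _ => (1:ℝ)) := by
      filter_upwards [hbdd t h1 h2] with ω h
      calc (Δ t ω) ^ 2 = |Δ t ω| ^ 2 := (sq_abs _).symm
        _ ≤ 1 := pow_le_one₀ (abs_nonneg _) h
    have hmono := condExp_mono (m := H (t - 1)) (hΔsqint t h1 h2) (integrable_const 1) hle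
    have hc : μ[(fun _ => (1:ℝ)) | H (t - 1)] = fun _ => (1:ℝ) :=
      condExp_const (hH (t - 1) (by omega)) 1
    filter_upwards [hmono] with ω hω
    simpa [hc] using hω
  have hV0 : ∀ᵐ ω ∂μ, 0 ≤ VV ω := by
    have hall : ∀ᵐ ω ∂μ, ∀ t ∈ Finset.Icc 1 n,
        0 ≤ (μ[fun ω' => (Δ t ω') ^ 2 | H (t - 1)]) ω :=
      (ae_ball_iff (Finset.Icc 1 n).countable_toSet).2 fun t ht =>
        hv0 t (Finset.mem_Icc.mp ht).1 (Finset.mem_Icc.mp ht).2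
    filter_upwards [hall] with ω h
    exact Finset.sum_nonneg h
  have hVn : ∀ᵐ ω ∂μ, VV ω ≤ (n : ℝ) := by
    have hall : ∀ᵐ ω ∂μ, ∀ t ∈ Finset.Icc 1 n,
        (μ[fun ω' => (Δ t ω') ^ 2 | H (t - 1)]) ω ≤ 1 :=
      (ae_ball_iff (Finset.Icc 1 n).countable_toSet).2 fun t ht =>
        hv1 t (Finset.mem_Icc.mp ht).1 (Finset.mem_Icc.mp ht).2
    filter_upwards [hall] with ω h
    calc VV ω ≤ ∑ t ∈ Finset.Icc 1 n, (1:ℝ) := Finset.sum_le_sum h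
      _ = (n : ℝ) := by simp [Nat.card_Icc]
  -- Markov bound for each exponential event
  have markov : ∀ l : ℝ, |l| ≤ 1 →
      μ {ω | Λ ≤ l * SS ω - l ^ 2 * VV ω} ≤ ENNReal.ofReal (Real.exp (-Λ)) := by
    intro l hl
    set f : Ω → ℝ := fun ω => Real.exp (l * SS ω - l ^ 2 * VV ω) with hfdef
    have hfmeas : Measurable[m0] f :=
      Real.measurable_exp.comp ((hSmeas.const_mul l).sub (hVmeas.const_mul (l ^ 2)))
    have hfbdd : ∀ᵐ ω ∂μ, |f ω| ≤ Real.exp n := by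
      filter_upwards [hSbdd, hV0] with ω h1 h2
      rw [abs_of_pos (Real.exp_pos _), Real.exp_le_exp]
      have hl1 := abs_le.1 hl
      have hS1 := abs_le.1 h1
      nlinarith [sq_nonneg l]
    have hfint : Integrable f μ := integrable_of_bdd hfmeas.aestronglyMeasurable hfbdd
    have hint1 : ∫ ω, f ω ∂μ ≤ 1 :=
      freedman_core μ n H F hH hHF hFH Δ hmeas hcond hbdd l hl
    have hset : {ω | Λ ≤ l * SS ω - l ^ 2 * VV ω} = {ω | Real.exp Λ ≤ f ω} := by
      ext ω
      simp only [Set.mem_setOf_eq, hfdef, Real.exp_le_exp]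
    rw [hset]
    have hmark := mul_meas_ge_le_integral_of_nonneg
      (Filter.Eventually.of_forall fun ω => (Real.exp_pos _).le) hfint (Real.exp Λ)
    have h := hmark.trans hint1
    have htoReal : (μ {ω | Real.exp Λ ≤ f ω}).toReal ≤ Real.exp (-Λ) := by
      rw [Real.exp_neg, ← one_div, le_div_iff₀ (Real.exp_pos Λ)]
      rw [mul_comm]
      exact h
    calc μ {ω | Real.exp Λ ≤ f ω}
        = ENNReal.ofReal ((μ {ω | Real.exp Λ ≤ f ω}).toReal) :=
          (ENNReal.ofReal_toReal (measure_ne_top μ _)).symm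
      _ ≤ ENNReal.ofReal (Real.exp (-Λ)) := ENNReal.ofReal_le_ofReal htoReal
  -- union of bad events
  set lam : ℕ → ℝ := fun k => min 1 (Real.sqrt (Λ / 2 ^ k)) with hlamdef
  have hlam0 : ∀ k, 0 < lam k := fun k =>
    lt_min one_pos (Real.sqrt_pos.2 (div_pos hΛpos (by positivity)))
  have hlamabs : ∀ k, |lam k| ≤ 1 := fun k => by
    rw [abs_of_pos (hlam0 k)]; exact min_le_left _ _
  set Bad : Set Ω := ⋃ k ∈ Finset.range (K + 1),
      ({ω | Λ ≤ lam k * SS ω - (lam k) ^ 2 * VV ω} ∪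
       {ω | Λ ≤ (-(lam k)) * SS ω - (-(lam k)) ^ 2 * VV ω}) with hBaddef
  have hBadle : μ Bad ≤ ENNReal.ofReal δ := by
    have hneg : ∀ k : ℕ, μ {ω | Λ ≤ (-(lam k)) * SS ω - (-(lam k)) ^ 2 * VV ω} ≤
        ENNReal.ofReal (Real.exp (-Λ)) := fun k =>
      markov (-(lam k)) (by rw [abs_neg]; exact hlamabs k)
    calc μ Bad ≤ ∑ k ∈ Finset.range (K + 1),
        μ ({ω | Λ ≤ lam k * SS ω - (lam k) ^ 2 * VV ω} ∪
           {ω | Λ ≤ (-(lam k)) * SS ω - (-(lam k)) ^ 2 * VV ω}) := by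
          rw [hBaddef]; exact measure_biUnion_finset_le _ _
      _ ≤ ∑ _k ∈ Finset.range (K + 1),
          (ENNReal.ofReal (Real.exp (-Λ)) + ENNReal.ofReal (Real.exp (-Λ))) :=
          Finset.sum_le_sum fun k _ => le_trans (measure_union_le _ _)
            (add_le_add (markov (lam k) (hlamabs k)) (hneg k))
      _ = (K + 1) • (ENNReal.ofReal (Real.exp (-Λ)) + ENNReal.ofReal (Real.exp (-Λ))) := by
          rw [Finset.sum_const, Finset.card_range]
      _ ≤ ENNReal.ofReal δ := by
          rw [← ENNReal.ofReal_add (Real.exp_pos _).le (Real.exp_pos _).le]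
          rw [nsmul_eq_mul]
          rw [show ((K + 1 : ℕ) : ℝ≥0∞) = ENNReal.ofReal ((K : ℝ) + 1) by
            rw [← ENNReal.ofReal_natCast]; congr 1; push_cast; ring]
          rw [← ENNReal.ofReal_mul (by positivity)]
          apply ENNReal.ofReal_le_ofReal
          rw [hexpneg]
          rw [show ((K:ℝ) + 1) * (δ / (2 * ((K:ℝ) + 1)) + δ / (2 * ((K:ℝ) + 1))) = δ by
            field_simp; ring]
  -- pointwise inclusion of the good event
  have hmain : ∀ᵐ ω ∂μ, ω ∉ Bad → |SS ω| ≤ 4 * (Real.sqrt (VV ω * Λ) + Λ) := by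
    filter_upwards [hV0, hVn] with ω h0 hvn hnb
    refine peel_point Λ (VV ω) (SS ω) K hΛq hΛpos h0 (le_trans hvn h2K) ?_
    intro k hk
    have hkmem : k ∈ Finset.range (K + 1) := Finset.mem_range.mpr (by omega)
    constructor
    · by_contra hcon
      push_neg at hcon
      exact hnb (by
        rw [hBaddef]
        exact Set.mem_iUnion₂.2 ⟨k, hkmem, Or.inl hcon⟩)
    · by_contra hcon
      push_neg at hcon
      exact hnb (by
        rw [hBaddef]
        exact Set.mem_iUnion₂.2 ⟨k, hkmem, Or.inr hcon⟩)
  -- conclusion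
  show ENNReal.ofReal (1 - δ) ≤ μ {ω | |SS ω| ≤ 4 * (Real.sqrt (VV ω * Λ) + Λ)}
  set T : Set Ω := {ω | |SS ω| ≤ 4 * (Real.sqrt (VV ω * Λ) + Λ)} with hTdef
  have h1 : μ Tᶜ ≤ μ Bad := by
    apply measure_mono_ae
    filter_upwards [hmain] with ω hm
    intro hω
    by_contra hb
    exact hω (hm hb)
  have h2 : μ Tᶜ ≤ ENNReal.ofReal δ := h1.trans hBadle
  have htot : (1 : ℝ≥0∞) ≤ μ T + μ Tᶜ := by
    calc (1 : ℝ≥0∞) = μ Set.univ := measure_univ.symm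
      _ = μ (T ∪ Tᶜ) := by rw [Set.union_compl_self]
      _ ≤ μ T + μ Tᶜ := measure_union_le _ _
  have hofReal : ENNReal.ofReal (1 - δ) + ENNReal.ofReal δ = 1 := by
    rw [← ENNReal.ofReal_add (by linarith) hδ0.le]
    norm_num
  calc ENNReal.ofReal (1 - δ) = 1 - ENNReal.ofReal δ := by
        rw [← hofReal, ENNReal.add_sub_cancel_right ENNReal.ofReal_ne_top]
    _ ≤ μ T := by
        rw [tsub_le_iff_right]
        calc (1 : ℝ≥0∞) ≤ μ T + μ Tᶜ := htot
          _ ≤ μ T + ENNReal.ofReal δ := add_le_add le_rfl h2
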